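/- (Discrete-time dimensionality reduction.) Let N ∈ ℕ and let u : {0,1,…,N} × ℕ × [0,∞) → ℝ satisfy the terminal condition u(N, I, S) = I for all I ∈ ℕ and S ≥ 0, and the Bellman recursion u(n-1, I, S) = sup over b ∈ [0, S] of ( ∫₀^b u(n, I+1, S-p) f(p) dp + (1 - F(b)) u(n, I, S) ) for all 1 ≤ n ≤ N, I ∈ ℕ, S ≥ 0, where for each n, I, S the function p ↦ u(n, I, S-p) is integrable on [0, S] with respect to f(p) dp. Then u(n, I, S) = I + u(n, 0, S) for all 0 ≤ n ≤ N, I ∈ ℕ and S ≥ 0. -/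

import Mathlib

open MeasureTheory Set

/-! Backward induction on `n`. If `u(n+1, J, T) = J + u(n+1, 0, T)`, the integrand of the
Bellman objective at level `I` exceeds the one at level `0` by `I f(p)`, so the objective at level
`I` is `b ↦ I F(b) + I (1 - F(b)) + (objective at 0) = I + (objective at 0)`. Its supremum over
`[0, S]` thus shifts by `I`; this needs the objective to be bounded above, which holds because it
is continuous on the compact interval `[0, S]`. -/

noncomputable def bellmanObjective (f F : ℝ → ℝ) (v : ℕ → ℝ → ℝ) (I : ℕ) (S b : ℝ) : ℝ :=
  (∫ p in (0 : ℝ)..b, v (I + 1) (S - p) * f p) + (1 - F b) * v I S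

noncomputable def bellmanValue (f F : ℝ → ℝ) (v : ℕ → ℝ → ℝ) (I : ℕ) (S : ℝ) : ℝ :=
  sSup (bellmanObjective f F v I S '' Icc 0 S)

section

variable {f F : ℝ → ℝ} {v : ℕ → ℝ → ℝ} {S : ℝ}

lemma continuous_of_eq_primitive (hf : Continuous f) (hF : ∀ b, F b = ∫ p in (0 : ℝ)..b, f p) :
    Continuous F :=
  (funext hF : F = _) ▸
    intervalIntegral.continuous_primitive (fun _ _ ↦ hf.intervalIntegrable _ _) 0

lemma integral_eq_mul_add_integral (hf : Continuous f) (hF : ∀ b, F b = ∫ p in (0 : ℝ)..b, f p)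
    (hv : ∀ (J : ℕ) (T : ℝ), 0 ≤ T → v J T = J + v 0 T)
    (hint : IntegrableOn (fun p ↦ v 0 (S - p) * f p) (Icc 0 S)) (J : ℕ) {b : ℝ}
    (hb : b ∈ Icc 0 S) :
    ∫ p in (0 : ℝ)..b, v J (S - p) * f p = J * F b + ∫ p in (0 : ℝ)..b, v 0 (S - p) * f p := by
  have hint_b : IntervalIntegrable (fun p ↦ v 0 (S - p) * f p) volume 0 b := by
    refine IntegrableOn.intervalIntegrable ?_
    rw [uIcc_of_le hb.1]
    exact hint.mono_set (Icc_subset_Icc le_rfl hb.2)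
  have hintegrand : EqOn (fun p ↦ v J (S - p) * f p)
      (fun p ↦ J * f p + v 0 (S - p) * f p) (uIcc 0 b) := by
    intro p hp
    rw [uIcc_of_le hb.1] at hp
    simp only [hv J (S - p) (by linarith [hp.2, hb.2])]
    ring
  rw [intervalIntegral.integral_congr hintegrand,
    intervalIntegral.integral_add ((hf.intervalIntegrable 0 b).const_mul _) hint_b,
    intervalIntegral.integral_const_mul, hF b]

lemma bellmanObjective_eq_add (hf : Continuous f) (hF : ∀ b, F b = ∫ p in (0 : ℝ)..b, f p)
    (hv : ∀ (J : ℕ) (T : ℝ), 0 ≤ T → v J T = J + v 0 T) (hS : 0 ≤ S)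
    (hint : IntegrableOn (fun p ↦ v 0 (S - p) * f p) (Icc 0 S)) (I : ℕ) {b : ℝ}
    (hb : b ∈ Icc 0 S) :
    bellmanObjective f F v I S b = I + bellmanObjective f F v 0 S b := by
  rw [bellmanObjective, bellmanObjective, integral_eq_mul_add_integral hf hF hv hint (I + 1) hb,
    integral_eq_mul_add_integral hf hF hv hint (0 + 1) hb, hv I S hS]
  push_cast
  ring

lemma continuousOn_bellmanObjective_zero (hf : Continuous f)
    (hF : ∀ b, F b = ∫ p in (0 : ℝ)..b, f p) (hv : ∀ (J : ℕ) (T : ℝ), 0 ≤ T → v J T = J + v 0 T)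
    (hS : 0 ≤ S) (hint : IntegrableOn (fun p ↦ v 0 (S - p) * f p) (Icc 0 S)) :
    ContinuousOn (bellmanObjective f F v 0 S) (Icc 0 S) := by
  have hFc := continuous_of_eq_primitive hf hF
  have hprimitive : ContinuousOn (fun b ↦ ∫ p in (0 : ℝ)..b, v 0 (S - p) * f p) (Icc 0 S) := by
    have := intervalIntegral.continuousOn_primitive_interval (μ := volume)
      (by rwa [uIcc_of_le hS])
    rwa [uIcc_of_le hS] at this
  refine ContinuousOn.congr (f := fun b ↦ F b + (∫ p in (0 : ℝ)..b, v 0 (S - p) * f p)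
    + (1 - F b) * v 0 S) (by fun_prop) fun b hb ↦ ?_
  rw [bellmanObjective, integral_eq_mul_add_integral hf hF hv hint (0 + 1) hb]
  simp

lemma bellmanValue_eq_add (hf : Continuous f) (hF : ∀ b, F b = ∫ p in (0 : ℝ)..b, f p)
    (hv : ∀ (J : ℕ) (T : ℝ), 0 ≤ T → v J T = J + v 0 T) (hS : 0 ≤ S)
    (hint : IntegrableOn (fun p ↦ v 0 (S - p) * f p) (Icc 0 S)) (I : ℕ) :
    bellmanValue f F v I S = I + bellmanValue f F v 0 S := by
  have hcompact : IsCompact (bellmanObjective f F v 0 S '' Icc 0 S) :=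
    isCompact_Icc.image_of_continuousOn (continuousOn_bellmanObjective_zero hf hF hv hS hint)
  have himage : bellmanObjective f F v I S '' Icc 0 S
      = (fun x ↦ (I : ℝ) + x) '' (bellmanObjective f F v 0 S '' Icc 0 S) := by
    rw [image_image]
    exact image_congr fun b hb ↦ bellmanObjective_eq_add hf hF hv hS hint I hb
  rw [bellmanValue, himage, bellmanValue]
  exact ((OrderIso.addLeft (I : ℝ)).map_csSup' ((nonempty_Icc.mpr hS).image _)
    hcompact.bddAbove).symm

end

theorem stmt_19_general (f F : ℝ → ℝ)
    (hf_cont : Continuous f)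
    (hF : ∀ b : ℝ, F b = ∫ p in (0 : ℝ)..b, f p)
    (N : ℕ) (u : ℕ → ℕ → ℝ → ℝ)
    (hterm : ∀ (I : ℕ) (S : ℝ), 0 ≤ S → u N I S = I)
    (hint : ∀ (n : ℕ) (I : ℕ) (S : ℝ), 0 ≤ S →
      MeasureTheory.IntegrableOn (fun p : ℝ => u n I (S - p) * f p) (Set.Icc 0 S))
    (hbell : ∀ (n : ℕ), n < N → ∀ (I : ℕ) (S : ℝ), 0 ≤ S →
      u n I S = sSup ((fun b : ℝ =>
        (∫ p in (0 : ℝ)..b, u (n + 1) (I + 1) (S - p) * f p)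
          + (1 - F b) * u (n + 1) I S) '' Set.Icc 0 S)) :
    ∀ (n : ℕ), n ≤ N → ∀ (I : ℕ) (S : ℝ), 0 ≤ S →
      u n I S = I + u n 0 S := by
  intro n hn
  induction hn using Nat.decreasingInduction with
  | self =>
    intro I S hS
    simp [hterm I S hS, hterm 0 S hS]
  | of_succ n hn ih =>
    intro I S hS
    rw [hbell n hn I S hS, hbell n hn 0 S hS]
    exact bellmanValue_eq_add hf_cont hF ih hS (hint (n + 1) 0 S hS) I

/-- (Discrete-time dimensionality reduction.) If `u` satisfies the terminal condition
`u(N,I,S) = I` and the Bellman recursion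
`u(n,I,S) = sup_{b ∈ [0,S]} ( ∫₀^b u(n+1,I+1,S-p) f(p) dp + (1 - F(b)) u(n+1,I,S) )`
for `n < N`, with the stated integrability, then `u(n,I,S) = I + u(n,0,S)` for all
`n ≤ N`, `I ∈ ℕ`, `S ≥ 0`. -/
theorem stmt_19 (f F : ℝ → ℝ)
    (hf_cont : Continuous f)
    (hf_nonpos : ∀ p ≤ (0 : ℝ), f p = 0)
    (hf_pos : ∀ p : ℝ, 0 < p → 0 < f p)
    (hf_int : (∫ p in Set.Ioi (0 : ℝ), f p) = 1)
    (hF : ∀ b : ℝ, F b = ∫ p in (0 : ℝ)..b, f p)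
    (N : ℕ) (u : ℕ → ℕ → ℝ → ℝ)
    (hterm : ∀ (I : ℕ) (S : ℝ), 0 ≤ S → u N I S = I)
    (hint : ∀ (n : ℕ) (I : ℕ) (S : ℝ), 0 ≤ S →
      MeasureTheory.IntegrableOn (fun p : ℝ => u n I (S - p) * f p) (Set.Icc 0 S))
    (hbell : ∀ (n : ℕ), n < N → ∀ (I : ℕ) (S : ℝ), 0 ≤ S →
      u n I S = sSup ((fun b : ℝ =>
        (∫ p in (0 : ℝ)..b, u (n + 1) (I + 1) (S - p) * f p)
          + (1 - F b) * u (n + 1) I S) '' Set.Icc 0 S)) :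
    ∀ (n : ℕ), n ≤ N → ∀ (I : ℕ) (S : ℝ), 0 ≤ S →
      u n I S = I + u n 0 S :=
  stmt_19_general f F hf_cont hF N u hterm hint hbell
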